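/- For every odd integer k > 3, the complement of the odd cycle C_k is a core: every graph homomorphism from the complement of C_k to itself is an automorphism. -/

import Mathlib

/-!
A homomorphism `f` of `Gᶜ` pulls `G`-cliques back to `G`-cliques: distinct vertices that are
not adjacent in `G` are adjacent in `Gᶜ`, so their images are distinct and not adjacent in `G`.
Since `C_k` is triangle-free for `k ≥ 4`, every edge `{a, a + 1}` of `C_k` has at most two
preimages. The `k` edges cover every vertex twice, so each has exactly two; the fibre sizes `t`
then satisfy `t a + t (a + 1) = 2`, so `t` is `2`-periodic and, `k` being odd, constantly `1`.
-/

open SimpleGraph Finset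
open scoped Fin.CommRing

namespace Fin

variable {k : ℕ} [NeZero k]

theorem apply_add_apply_add_one_eq_two {t : Fin k → ℕ} (hsum : ∑ a, t a = k)
    (hle : ∀ a, t a + t (a + 1) ≤ 2) (a : Fin k) : t a + t (a + 1) = 2 := by
  have htotal : ∑ a, (t a + t (a + 1)) = ∑ _a : Fin k, 2 := by
    rw [sum_add_distrib, Fintype.sum_equiv (Equiv.addRight 1) (fun a ↦ t (a + 1)) t fun _ ↦ rfl,
      hsum, sum_const, smul_eq_mul, mul_two]
  exact (sum_eq_sum_iff_of_le fun a _ ↦ hle a).1 htotal a (mem_univ a)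

theorem eq_one_of_apply_add_apply_add_one_eq_two (hk : Odd k) {t : Fin k → ℕ}
    (h : ∀ a, t a + t (a + 1) = 2) (a : Fin k) : t a = 1 := by
  have hperiod : ∀ (m : ℕ) (b : Fin k), t (b + 2 * m) = t b := by
    intro m
    induction m with
    | zero => simp
    | succ m ih =>
      intro b
      have h₁ := h (b + 2 * m)
      have h₂ := h (b + 2 * m + 1)
      rw [← ih b]
      have : b + 2 * m + 1 + 1 = b + 2 * ↑(m + 1) := by push_cast; ring
      rw [this] at h₂
      omega
  obtain ⟨m, rfl⟩ := hk
  -- `a + 2m` is `a - 1`, since `2m + 1 = 0` in `Fin (2m + 1)`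
  have hwrap : a + 2 * m + 1 = a := by
    have : ((2 * m + 1 : ℕ) : Fin (2 * m + 1)) = 0 := Fin.natCast_self _
    push_cast at this
    linear_combination this
  have := h (a + 2 * m)
  rw [hwrap, hperiod] at this
  omega

end Fin

namespace SimpleGraph

variable {V W : Type*} {G : SimpleGraph V} {H : SimpleGraph W}

theorem IsClique.card_lt_of_cliqueFree {n : ℕ} {s : Finset V} (hs : G.IsClique (s : Set V))
    (hG : G.CliqueFree n) : #s < n := by
  by_contra! h
  obtain ⟨t, hts, ht⟩ := exists_subset_card_eq h
  exact hG t ⟨hs.subset (coe_subset.2 hts), ht⟩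

theorem IsClique.preimage_of_compl_hom (f : Gᶜ →g Hᶜ) {s : Set W} (hs : H.IsClique s) :
    G.IsClique (f ⁻¹' s) := by
  intro x hx y hy hxy
  by_contra hxy'
  have hf := f.map_adj ((compl_adj _ _ _).2 ⟨hxy, hxy'⟩)
  exact hf.2 (hs hx hy hf.1)

theorem cycleGraph_cliqueFree_three {n : ℕ} (hn : 4 ≤ n) : (cycleGraph n).CliqueFree 3 := by
  obtain ⟨n, rfl⟩ := Nat.exists_eq_add_of_le' hn
  intro s hs
  obtain ⟨a, b, c, hab, hac, hbc, -⟩ := is3Clique_iff.1 hs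
  have h1 : (1 : Fin (n + 4)) ≠ 0 := by simp
  have h3 : (3 : Fin (n + 4)) ≠ 0 := by simp [Fin.ext_iff, Nat.mod_eq_of_lt]
  rw [cycleGraph_adj] at hab hac hbc
  -- `b - c = (a - c) - (a - b)` lies in `{0, ±2}`, never in `{±1}`
  grind

theorem card_fiber_add_card_fiber_add_one_le_two {k : ℕ} [NeZero k] (hk : 4 ≤ k)
    (f : (cycleGraph k)ᶜ →g (cycleGraph k)ᶜ) (a : Fin k) :
    #{x | f x = a} + #{x | f x = a + 1} ≤ 2 := by
  have hne : a ≠ a + 1 := by simp [Fin.ext_iff]; omega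
  have hedge : (cycleGraph k).IsClique ({a, a + 1} : Set (Fin k)) :=
    isClique_pair.2 fun _ ↦ cycleGraph_adj'.2 <| .inr <| by
      simp [Nat.mod_eq_of_lt (by omega : 1 < k)]
  have hpre : (cycleGraph k).IsClique
      (({x | f x = a ∨ f x = a + 1} : Finset (Fin k)) : Set (Fin k)) := by
    simpa [Set.preimage] using hedge.preimage_of_compl_hom f
  rw [← card_union_of_disjoint (disjoint_filter.2 fun x _ hx ↦ hx ▸ hne), ← filter_or]
  exact Nat.lt_succ_iff.1 (hpre.card_lt_of_cliqueFree (cycleGraph_cliqueFree_three hk))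

end SimpleGraph

/-- For every odd integer `k > 3`, the complement of the odd cycle `C_k` is a core:
every graph homomorphism from the complement of `C_k` to itself is an automorphism. -/
theorem compl_odd_cycle_is_core (k : ℕ) (hk : 3 < k) (hodd : Odd k) :
    ∀ f : (SimpleGraph.cycleGraph k)ᶜ →g (SimpleGraph.cycleGraph k)ᶜ,
      Function.Bijective f := by
  intro f
  have : NeZero k := ⟨by omega⟩
  have hsum : ∑ a, #{x | f x = a} = k := by simp [sum_card_fiberwise_eq_card_filter]
  have hfiber : ∀ a, #{x | f x = a} = 1 :=
    Fin.eq_one_of_apply_add_apply_add_one_eq_two hodd <|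
      Fin.apply_add_apply_add_one_eq_two hsum (card_fiber_add_card_fiber_add_one_le_two hk f)
  refine Finite.injective_iff_bijective.1 fun x y hxy ↦ ?_
  exact card_le_one.1 (hfiber (f x)).le x (by simp) y (by simp [hxy])
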